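/- arXiv:1402.4087 — 2 statements merged into one kernel-verified Lean document; each statement's English description precedes it below -/
import Mathlib

section
/- Let L be a second-order Lagrangian and FL its restricted Legendre map. If the total derivative of FL at a point a of the third-order jet coordinate space is surjective (i.e., FL is a submersion at a), then the Hessian matrix (∂²L/∂u^α_I ∂u^β_K)_{|I|=|K|=2, 1≤α,β≤n}, evaluated at the second-order jet coordinates underlying a, is invertible. -/
open scoped BigOperators

noncomputable section

/-- Multi-indices on `Fin m` of total degree `k`. -/
abbrev Idx (m k : ℕ) : Type := { I : Fin m → ℕ // ∑ i, I i = k }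

instance (m k : ℕ) : Fintype (Idx m k) :=
  Fintype.subtype (Finset.Nat.antidiagonalTuple m k) fun _ =>
    Finset.Nat.mem_antidiagonalTuple

/-- The multi-index `1_i + 1_j`. -/
def idx2 {m : ℕ} (i j : Fin m) : Idx m 2 :=
  ⟨Pi.single i 1 + Pi.single j 1, by
    simp [Finset.sum_add_distrib, Finset.sum_pi_single']⟩

/-- The multi-index `I + 1_j`. -/
def Idx.succ {m k : ℕ} (I : Idx m k) (j : Fin m) : Idx m (k + 1) :=
  ⟨I.1 + Pi.single j 1, by
    simp [Finset.sum_add_distrib, I.2, Finset.sum_pi_single']⟩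

/-- The combinatorial factor `n(ij)`. -/
def nij {m : ℕ} (i j : Fin m) : ℝ := if i = j then 1 else 2

/-- Partial derivative of `f : ℝ^m → ℝ` in the `i`-th coordinate direction. -/
def pd {m : ℕ} (i : Fin m) (f : (Fin m → ℝ) → ℝ) : (Fin m → ℝ) → ℝ :=
  fun x => fderiv ℝ f x (Pi.single i 1)

/-- Iterated partial derivative `∂^I` associated to a multi-index `I`. -/
def pdI {m : ℕ} (I : Fin m → ℕ) (f : (Fin m → ℝ) → ℝ) : (Fin m → ℝ) → ℝ :=
  (List.finRange m).foldr (fun i g => (pd i)^[I i] g) f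

/-- Second-order jet coordinate space: coordinates `(xⁱ, uᵅ, uᵅᵢ, uᵅ_I)`, `|I| = 2`. -/
abbrev J2 (m n : ℕ) : Type :=
  (Fin m → ℝ) × (Fin n → ℝ) × (Fin m → Fin n → ℝ) × (Idx m 2 → Fin n → ℝ)

/-- Third-order jet coordinate space: additionally `uᵅ_J`, `|J| = 3`. -/
abbrev J3 (m n : ℕ) : Type :=
  (Fin m → ℝ) × (Fin n → ℝ) × (Fin m → Fin n → ℝ) × (Idx m 2 → Fin n → ℝ) ×
    (Idx m 3 → Fin n → ℝ)

/-- Projection from third-order to second-order jet coordinates. -/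
def π32 {m n : ℕ} (w : J3 m n) : J2 m n := (w.1, w.2.1, w.2.2.1, w.2.2.2.1)

/-- Second jet prolongation of `φ : ℝ^m → ℝ^n`. -/
def jet2 {m n : ℕ} (φ : (Fin m → ℝ) → Fin n → ℝ) (x : Fin m → ℝ) : J2 m n :=
  (x, φ x, fun i α => pd i (fun y => φ y α) x, fun I α => pdI I.1 (fun y => φ y α) x)

/-- Third jet prolongation of `φ : ℝ^m → ℝ^n`. -/
def jet3 {m n : ℕ} (φ : (Fin m → ℝ) → Fin n → ℝ) (x : Fin m → ℝ) : J3 m n :=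
  (x, φ x, fun i α => pd i (fun y => φ y α) x,
    fun I α => pdI I.1 (fun y => φ y α) x,
    fun J α => pdI J.1 (fun y => φ y α) x)

/-- Coordinate direction `∂/∂xʲ` in `J2`. -/
def eX {m n : ℕ} (j : Fin m) : J2 m n := (Pi.single j 1, 0, 0, 0)
/-- Coordinate direction `∂/∂uᵅ` in `J2`. -/
def eU {m n : ℕ} (α : Fin n) : J2 m n := (0, Pi.single α 1, 0, 0)
/-- Coordinate direction `∂/∂uᵅᵢ` in `J2`. -/
def eU1 {m n : ℕ} (i : Fin m) (α : Fin n) : J2 m n :=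
  (0, 0, Pi.single i (Pi.single α 1), 0)
/-- Coordinate direction `∂/∂uᵅ_I` in `J2`. -/
def eU2 {m n : ℕ} (I : Idx m 2) (α : Fin n) : J2 m n :=
  (0, 0, 0, Pi.single I (Pi.single α 1))

/-- Partial derivative `∂G/∂xʲ` of a function of the second-order jet coordinates. -/
def dX {m n : ℕ} (j : Fin m) (G : J2 m n → ℝ) : J2 m n → ℝ :=
  fun a => fderiv ℝ G a (eX j)
/-- Partial derivative `∂G/∂uᵅ`. -/
def dU {m n : ℕ} (α : Fin n) (G : J2 m n → ℝ) : J2 m n → ℝ :=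
  fun a => fderiv ℝ G a (eU α)
/-- Partial derivative `∂G/∂uᵅᵢ`. -/
def dU1 {m n : ℕ} (i : Fin m) (α : Fin n) (G : J2 m n → ℝ) : J2 m n → ℝ :=
  fun a => fderiv ℝ G a (eU1 i α)
/-- Partial derivative `∂G/∂uᵅ_I`, `|I| = 2`. -/
def dU2 {m n : ℕ} (I : Idx m 2) (α : Fin n) (G : J2 m n → ℝ) : J2 m n → ℝ :=
  fun a => fderiv ℝ G a (eU2 I α)

/-- Coordinate total derivative `D_j G`, a function of the third-order jet coordinates. -/
def totalD {m n : ℕ} (j : Fin m) (G : J2 m n → ℝ) : J3 m n → ℝ := fun w =>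
  dX j G (π32 w) + (∑ α, w.2.2.1 j α * dU α G (π32 w))
    + (∑ α, ∑ i, w.2.2.2.1 (idx2 i j) α * dU1 i α G (π32 w))
    + (∑ α, ∑ I : Idx m 2, w.2.2.2.2 (Idx.succ I j) α * dU2 I α G (π32 w))

/-- The first-order momentum components `pⁱᵅ` of the restricted Legendre map. -/
def FLp1 {m n : ℕ} (L : J2 m n → ℝ) (i : Fin m) (α : Fin n) : J3 m n → ℝ := fun w =>
  dU1 i α L (π32 w) - ∑ j, (nij i j)⁻¹ * totalD j (dU2 (idx2 i j) α L) w

/-- Euler–Lagrange expression of a second-order Lagrangian `L` at `φ`. -/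
def EL {m n : ℕ} (L : J2 m n → ℝ) (φ : (Fin m → ℝ) → Fin n → ℝ) (α : Fin n) :
    (Fin m → ℝ) → ℝ := fun x =>
  dU α L (jet2 φ x)
    - (∑ i, pd i (fun y => dU1 i α L (jet2 φ y)) x)
    + ∑ I : Idx m 2, pdI I.1 (fun y => dU2 I α L (jet2 φ y)) x

/-- Restricted 2-symmetric multimomentum coordinates `(xⁱ, uᵅ, uᵅᵢ, pⁱᵅ, p^Iᵅ)`. -/
abbrev Mom (m n : ℕ) : Type :=
  (Fin m → ℝ) × (Fin n → ℝ) × (Fin m → Fin n → ℝ) × (Fin m → Fin n → ℝ) ×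
    (Idx m 2 → Fin n → ℝ)

/-- The restricted Legendre map `FL : J³π → J²π^‡`. -/
def FLmap {m n : ℕ} (L : J2 m n → ℝ) : J3 m n → Mom m n := fun w =>
  (w.1, w.2.1, w.2.2.1, fun i α => FLp1 L i α w, fun I α => dU2 I α L (π32 w))

/-- The Hessian matrix `(∂²L/∂uᵅ_I ∂uᵝ_K)` of `L` with respect to the highest-order
velocities, at a point of the second-order jet coordinate space. -/
def Hess {m n : ℕ} (L : J2 m n → ℝ) (b : J2 m n) :
    Matrix (Idx m 2 × Fin n) (Idx m 2 × Fin n) ℝ :=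
  Matrix.of fun p q => fderiv ℝ (dU2 q.1 q.2 L) b (eU2 p.1 p.2)

/-! The restricted Legendre map keeps `(xⁱ, uᵅ, uᵅᵢ)` and its top momenta `p^I_α = ∂L/∂uᵅ_I`
depend on the second-order jet only. So a tangent vector that `dFL` sends to `(0, 0, 0, 0, r)`
has vanishing `x`, `u`, `uᵢ` components, and its `u_I` components `c` satisfy `c ᵥ* Hess = r`.
Surjectivity of `dFL` therefore makes `c ↦ c ᵥ* Hess` surjective, i.e. the Hessian invertible. -/

open Matrix
open scoped ContDiff

section

variable {m n : ℕ}

theorem ContDiff.fderiv_apply_const {E F : Type*} [NormedAddCommGroup E] [NormedSpace ℝ E]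
    [NormedAddCommGroup F] [NormedSpace ℝ F] {G : E → F} (hG : ContDiff ℝ ∞ G) (v : E) :
    ContDiff ℝ ∞ fun x => fderiv ℝ G x v :=
  (hG.fderiv_right le_rfl).clm_apply contDiff_const

@[fun_prop]
theorem contDiff_dX (j : Fin m) {G : J2 m n → ℝ} (hG : ContDiff ℝ ∞ G) :
    ContDiff ℝ ∞ (dX j G) :=
  hG.fderiv_apply_const _

@[fun_prop]
theorem contDiff_dU (α : Fin n) {G : J2 m n → ℝ} (hG : ContDiff ℝ ∞ G) :
    ContDiff ℝ ∞ (dU α G) :=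
  hG.fderiv_apply_const _

@[fun_prop]
theorem contDiff_dU1 (i : Fin m) (α : Fin n) {G : J2 m n → ℝ} (hG : ContDiff ℝ ∞ G) :
    ContDiff ℝ ∞ (dU1 i α G) :=
  hG.fderiv_apply_const _

@[fun_prop]
theorem contDiff_dU2 (I : Idx m 2) (α : Fin n) {G : J2 m n → ℝ} (hG : ContDiff ℝ ∞ G) :
    ContDiff ℝ ∞ (dU2 I α G) :=
  hG.fderiv_apply_const _

@[fun_prop]
theorem contDiff_π32 : ContDiff ℝ ∞ (π32 : J3 m n → J2 m n) := by
  unfold π32; fun_prop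

@[fun_prop]
theorem contDiff_totalD (j : Fin m) {G : J2 m n → ℝ} (hG : ContDiff ℝ ∞ G) :
    ContDiff ℝ ∞ (totalD j G) := by
  unfold totalD; fun_prop

theorem contDiff_FLmap {L : J2 m n → ℝ} (hL : ContDiff ℝ ∞ L) : ContDiff ℝ ∞ (FLmap L) := by
  unfold FLmap FLp1; fun_prop

def π32CLM : J3 m n →L[ℝ] J2 m n :=
  LinearMap.toContinuousLinearMap
    { toFun := π32, map_add' := fun _ _ => rfl, map_smul' := fun _ _ => rfl }

section fderivFLmap

variable {L : J2 m n → ℝ} {a : J3 m n}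

theorem fderiv_FLmap_apply_fst (hFL : DifferentiableAt ℝ (FLmap L) a) (v : J3 m n) :
    (fderiv ℝ (FLmap L) a v).1 = v.1 :=
  congrArg (· v) (hFL.hasFDerivAt.fst.unique hasFDerivAt_fst)

theorem fderiv_FLmap_apply_snd_fst (hFL : DifferentiableAt ℝ (FLmap L) a) (v : J3 m n) :
    (fderiv ℝ (FLmap L) a v).2.1 = v.2.1 :=
  congrArg (· v) (hFL.hasFDerivAt.snd.fst.unique
    (hasFDerivAt_snd.fst : HasFDerivAt (fun w : J3 m n => w.2.1) _ a))

theorem fderiv_FLmap_apply_snd_snd_fst (hFL : DifferentiableAt ℝ (FLmap L) a) (v : J3 m n) :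
    (fderiv ℝ (FLmap L) a v).2.2.1 = v.2.2.1 :=
  congrArg (· v) (hFL.hasFDerivAt.snd.snd.fst.unique
    (hasFDerivAt_snd.snd.fst : HasFDerivAt (fun w : J3 m n => w.2.2.1) _ a))

theorem fderiv_FLmap_apply_snd_snd_snd_snd {I : Idx m 2} {α : Fin n}
    (hFL : DifferentiableAt ℝ (FLmap L) a) (hdU2 : DifferentiableAt ℝ (dU2 I α L) (π32 a))
    (v : J3 m n) :
    (fderiv ℝ (FLmap L) a v).2.2.2.2 I α = fderiv ℝ (dU2 I α L) (π32 a) (π32 v) := by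
  have hFL' := hasFDerivAt_pi'.1 (hasFDerivAt_pi'.1 hFL.hasFDerivAt.snd.snd.snd.snd I) α
  exact congrArg (· v) (hFL'.unique (hdU2.hasFDerivAt.comp a π32CLM.hasFDerivAt))

end fderivFLmap

theorem sum_smul_eU2 (c : Idx m 2 → Fin n → ℝ) :
    ∑ p : Idx m 2 × Fin n, c p.1 p.2 • eU2 p.1 p.2 = ((0, 0, 0, c) : J2 m n) := by
  ext <;> simp [eU2, Prod.fst_sum, Prod.snd_sum, Fintype.sum_prod_type, Finset.sum_apply,
    Pi.single_apply, ite_apply, Finset.sum_ite_eq]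

theorem vecMul_Hess (L : J2 m n → ℝ) (b : J2 m n) (c : Idx m 2 × Fin n → ℝ)
    (q : Idx m 2 × Fin n) :
    vecMul c (Hess L b) q = fderiv ℝ (dU2 q.1 q.2 L) b (0, 0, 0, fun I α => c (I, α)) := by
  rw [← sum_smul_eU2, map_sum]
  simp [vecMul, dotProduct, Hess]

theorem surjective_vecMul_Hess {L : J2 m n → ℝ} {a : J3 m n}
    (hFL : DifferentiableAt ℝ (FLmap L) a)
    (hdU2 : ∀ I α, DifferentiableAt ℝ (dU2 I α L) (π32 a))
    (hsub : Function.Surjective (fderiv ℝ (FLmap L) a)) :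
    Function.Surjective fun c => vecMul c (Hess L (π32 a)) := by
  intro r
  obtain ⟨v, hv⟩ := hsub (0, 0, 0, 0, fun I α => r (I, α))
  have hπv : π32 v = (0, 0, 0, v.2.2.2.1) := by
    have h1 := fderiv_FLmap_apply_fst hFL v
    have h2 := fderiv_FLmap_apply_snd_fst hFL v
    have h3 := fderiv_FLmap_apply_snd_snd_fst hFL v
    rw [hv] at h1 h2 h3
    simp only [π32, ← h1, ← h2, ← h3]
  refine ⟨fun p => v.2.2.2.1 p.1 p.2, funext fun q => ?_⟩
  have h4 := fderiv_FLmap_apply_snd_snd_snd_snd hFL (hdU2 q.1 q.2) v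
  rw [hv, hπv] at h4
  exact (vecMul_Hess L (π32 a) _ q).trans h4.symm

end

/-- if the restricted Legendre map is a submersion at `a`, then the Hessian
of `L` with respect to the highest-order velocities is invertible at the underlying
second-order jet point. -/
theorem statement5 (m n : ℕ) (L : J2 m n → ℝ) (hL : ContDiff ℝ (⊤ : ℕ∞) L)
    (a : J3 m n)
    (hsub : Function.Surjective ⇑(fderiv ℝ (FLmap L) a)) :
    (Hess L (π32 a)).det ≠ 0 := by
  have hFL := (contDiff_FLmap hL).differentiable (by simp) a
  have hdU2 I α := (contDiff_dU2 I α hL).differentiable (by simp) (π32 a)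
  have hHess := vecMul_surjective_iff_isUnit.mp (surjective_vecMul_Hess hFL hdU2 hsub)
  exact ((isUnit_iff_isUnit_det _).mp hHess).ne_zero
end
end

section
/- Let L be a second-order Lagrangian and φ : ℝ^m → ℝ^n a smooth map. Define along φ the Legendre momenta p^i_α := [∂L/∂u^α_i − Σ_{j=1}^m (1/n(ij)) D_j(∂L/∂u^α_{1_i+1_j})] ∘ j³φ and p^I_α := (∂L/∂u^α_I) ∘ j²φ (|I| = 2). Then: (a) the equations Σ_{j=1}^m (1/n(ij)) ∂p^{1_i+1_j}_α/∂x^j = (∂L/∂u^α_i) ∘ j²φ − p^i_α hold identically on ℝ^m for all i and α; and (b) the equations Σ_{i=1}^m ∂p^i_α/∂x^i = (∂L/∂u^α) ∘ j²φ hold on ℝ^m for all α if and only if φ satisfies the Euler–Lagrange field equations EL_α(φ) = 0 for every α. -/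
open scoped BigOperators

noncomputable section

/-! Everything rests on the chain rule `∂_j (G ∘ j²φ) = (D_j G) ∘ j³φ`. With it, (a) is the
definition of `pⁱ_α` rearranged. For (b), the divergence `Σ_i ∂_i pⁱ_α` equals
`Σ_i ∂_i (∂L/∂uᵅᵢ ∘ j²φ) - Σ_{i,j} n(ij)⁻¹ ∂_i ∂_j (∂L/∂uᵅ_{1_i+1_j} ∘ j²φ)`; mixed partials commute
and every `I` with `|I| = 2` is `1_i + 1_j` for exactly `n(ij)` ordered pairs `(i, j)`, so the
double sum is `Σ_{|I|=2} ∂^I (∂L/∂uᵅ_I ∘ j²φ)`. Hence `Σ_i ∂_i pⁱ_α = ∂L/∂uᵅ ∘ j²φ - EL_α(φ)`. -/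

open scoped ContDiff

theorem contDiff_fderiv_apply_const {E F : Type*} [NormedAddCommGroup E] [NormedSpace ℝ E]
    [NormedAddCommGroup F] [NormedSpace ℝ F] {f : E → F} (hf : ContDiff ℝ ∞ f) (v : E) :
    ContDiff ℝ ∞ fun x => fderiv ℝ f x v :=
  (contDiff_infty_iff_fderiv.1 hf).2.clm_apply contDiff_const

section PartialDerivatives

variable {m : ℕ}

theorem contDiff_pd {f : (Fin m → ℝ) → ℝ} (hf : ContDiff ℝ ∞ f) (i : Fin m) :
    ContDiff ℝ ∞ (pd i f) :=
  contDiff_fderiv_apply_const hf _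

section Linearity

variable {f g : (Fin m → ℝ) → ℝ} {x : Fin m → ℝ}

theorem pd_sub (hf : DifferentiableAt ℝ f x) (hg : DifferentiableAt ℝ g x) (i : Fin m) :
    pd i (fun y => f y - g y) x = pd i f x - pd i g x := by
  rw [pd, fderiv_fun_sub hf hg]
  rfl

theorem pd_const_mul (hf : DifferentiableAt ℝ f x) (c : ℝ) (i : Fin m) :
    pd i (fun y => c * f y) x = c * pd i f x := by
  rw [pd, fderiv_const_mul hf]
  rfl

theorem pd_sum {ι : Type*} {s : Finset ι} {F : ι → (Fin m → ℝ) → ℝ}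
    (hF : ∀ k ∈ s, DifferentiableAt ℝ (F k) x) (i : Fin m) :
    pd i (fun y => ∑ k ∈ s, F k y) x = ∑ k ∈ s, pd i (F k) x := by
  rw [pd, fderiv_fun_sum hF, sum_apply]
  rfl

end Linearity

theorem pd_comm {f : (Fin m → ℝ) → ℝ} (hf : ContDiff ℝ ∞ f) (i j : Fin m) :
    pd i (pd j f) = pd j (pd i f) := by
  funext x
  have hd : Differentiable ℝ (fderiv ℝ f) :=
    (contDiff_infty_iff_fderiv.1 hf).2.differentiable (by simp)
  have hpd2 : ∀ u v : Fin m → ℝ,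
      fderiv ℝ (fun y => fderiv ℝ f y u) x v = fderiv ℝ (fderiv ℝ f) x v u := fun u v => by
    simp [fderiv_clm_apply (hd x) (differentiableAt_const u)]
  change fderiv ℝ (fun y => fderiv ℝ f y _) x _ = fderiv ℝ (fun y => fderiv ℝ f y _) x _
  rw [hpd2, hpd2]
  exact (hf.contDiffAt.isSymmSndFDerivAt (by simp; decide)).eq _ _

theorem pd_iterate_pd_comm {f : (Fin m → ℝ) → ℝ} (hf : ContDiff ℝ ∞ f) (i j : Fin m) (k : ℕ) :
    pd j ((pd i)^[k] f) = (pd i)^[k] (pd j f) := by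
  induction k generalizing f with
  | zero => rfl
  | succ k ih => rw [Function.iterate_succ_apply, Function.iterate_succ_apply,
      ih (contDiff_pd hf i), pd_comm hf i j]

section Foldr

variable (I : Fin m → ℕ) (l : List (Fin m))

theorem contDiff_foldr_iterate_pd {f : (Fin m → ℝ) → ℝ} (hf : ContDiff ℝ ∞ f) :
    ContDiff ℝ ∞ (l.foldr (fun i g => (pd i)^[I i] g) f) := by
  induction l with
  | nil => exact hf
  | cons i l ih =>
    rw [List.foldr_cons]
    exact Function.Iterate.rec _ ih (fun g hg => contDiff_pd hg i) (I i)

theorem pd_foldr_iterate_pd {f : (Fin m → ℝ) → ℝ} (hf : ContDiff ℝ ∞ f) (j : Fin m) :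
    pd j (l.foldr (fun i g => (pd i)^[I i] g) f)
      = l.foldr (fun i g => (pd i)^[I i] g) (pd j f) := by
  induction l with
  | nil => rfl
  | cons i l ih =>
    rw [List.foldr_cons, List.foldr_cons, ← ih,
      pd_iterate_pd_comm (contDiff_foldr_iterate_pd I l hf)]

theorem foldr_iterate_pd_add_single {f : (Fin m → ℝ) → ℝ} (hf : ContDiff ℝ ∞ f) {j : Fin m}
    (hl : l.Nodup) (hj : j ∈ l) :
    l.foldr (fun i g => (pd i)^[(I + Pi.single j 1 : Fin m → ℕ) i] g) f
      = l.foldr (fun i g => (pd i)^[I i] g) (pd j f) := by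
  induction l with
  | nil => simp at hj
  | cons a l ih =>
    obtain ⟨hal, hl⟩ := List.nodup_cons.1 hl
    rw [List.foldr_cons, List.foldr_cons]
    by_cases haj : a = j
    · subst haj
      have hagree : ∀ i ∈ l, ∀ g : (Fin m → ℝ) → ℝ,
          (pd i)^[(I + Pi.single a 1 : Fin m → ℕ) i] g = (pd i)^[I i] g := fun i hi g => by
        rw [Pi.add_apply, Pi.single_eq_of_ne (ne_of_mem_of_not_mem hi hal), add_zero]
      rw [List.foldr_ext _ _ _ hagree, Pi.add_apply, Pi.single_eq_same,
        Function.iterate_succ_apply, pd_foldr_iterate_pd I l hf]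
    · rw [Pi.add_apply, Pi.single_eq_of_ne haj, add_zero,
        ih hl ((List.mem_cons.1 hj).resolve_left (Ne.symm haj))]

end Foldr

theorem contDiff_pdI {f : (Fin m → ℝ) → ℝ} (hf : ContDiff ℝ ∞ f) (I : Fin m → ℕ) :
    ContDiff ℝ ∞ (pdI I f) :=
  contDiff_foldr_iterate_pd I _ hf

theorem pdI_add_single {f : (Fin m → ℝ) → ℝ} (hf : ContDiff ℝ ∞ f) (I : Fin m → ℕ) (j : Fin m) :
    pdI (I + Pi.single j 1) f = pd j (pdI I f) := by
  rw [pdI, pdI, foldr_iterate_pd_add_single I _ hf (List.nodup_finRange m) (List.mem_finRange j),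
    pd_foldr_iterate_pd I _ hf]

theorem pdI_idx2 {f : (Fin m → ℝ) → ℝ} (hf : ContDiff ℝ ∞ f) (i j : Fin m) :
    pdI (idx2 i j).1 f = pd j (pd i f) := by
  have h0 : pdI (0 : Fin m → ℕ) f = f := by
    simp [pdI]
  rw [idx2, pdI_add_single hf, ← zero_add (Pi.single i 1), pdI_add_single hf, h0]

end PartialDerivatives

section MultiIndices

theorem exists_eq_add_single_of_sum_eq_succ {ι : Type*} [Fintype ι] [DecidableEq ι]
    {f : ι → ℕ} {k : ℕ} (h : ∑ i, f i = k + 1) :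
    ∃ i, ∃ g : ι → ℕ, ∑ i, g i = k ∧ f = g + Pi.single i 1 := by
  obtain ⟨i, -, hi⟩ := Finset.exists_ne_zero_of_sum_ne_zero (h.trans_ne k.succ_ne_zero)
  have hf : f = (f - Pi.single i 1) + Pi.single i 1 := by
    funext l
    by_cases hl : l = i
    · subst hl; simp only [Pi.add_apply, Pi.sub_apply, Pi.single_eq_same]; omega
    · simp [Pi.single_eq_of_ne hl]
  refine ⟨i, f - Pi.single i 1, ?_, hf⟩
  rw [hf] at h
  simpa [Finset.sum_add_distrib] using h

variable {m : ℕ}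

theorem exists_idx2_eq (I : Idx m 2) : ∃ i j, idx2 i j = I := by
  obtain ⟨j, g, hg, hI⟩ := exists_eq_add_single_of_sum_eq_succ I.2
  obtain ⟨i, h, hh, rfl⟩ := exists_eq_add_single_of_sum_eq_succ hg
  have h0 : h = 0 := funext fun l => Finset.sum_eq_zero_iff.1 hh l (Finset.mem_univ l)
  exact ⟨i, j, Subtype.ext (by rw [hI, h0, zero_add]; rfl)⟩

theorem idx2_eq_idx2_iff {i j k l : Fin m} :
    idx2 i j = idx2 k l ↔ (i = k ∧ j = l) ∨ (i = l ∧ j = k) := by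
  rw [idx2, idx2, Subtype.mk.injEq,
    Pi.single_add_single_eq_single_add_single one_ne_zero one_ne_zero]
  simp

theorem idx2_comm (i j : Fin m) : idx2 i j = idx2 j i :=
  idx2_eq_idx2_iff.2 (Or.inr ⟨rfl, rfl⟩)

theorem sum_sum_inv_nij_mul (F : Idx m 2 → ℝ) :
    ∑ i, ∑ j, (nij i j)⁻¹ * F (idx2 i j) = ∑ I, F I := by
  rw [← Fintype.sum_prod_type', ← Finset.sum_fiberwise Finset.univ (fun p => idx2 p.1 p.2)]
  refine Finset.sum_congr rfl fun I _ => ?_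
  obtain ⟨i, j, rfl⟩ := exists_idx2_eq I
  have hfiber : Finset.univ.filter (fun p : Fin m × Fin m => idx2 p.1 p.2 = idx2 i j)
      = {(i, j), (j, i)} := by
    ext p
    simp [idx2_eq_idx2_iff, Prod.ext_iff]
  rw [hfiber]
  by_cases hij : i = j
  · subst hij
    simp [nij]
  · rw [Finset.sum_pair (by simp [Prod.ext_iff, hij]), idx2_comm j i]
    simp only [nij, if_neg hij, if_neg (Ne.symm hij)]
    ring

end MultiIndices

section ChainRule

variable {m n : ℕ}

theorem π32_jet3 (φ : (Fin m → ℝ) → Fin n → ℝ) (x : Fin m → ℝ) : π32 (jet3 φ x) = jet2 φ x :=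
  rfl

theorem contDiff_jet2 {φ : (Fin m → ℝ) → Fin n → ℝ} (hφ : ContDiff ℝ ∞ φ) :
    ContDiff ℝ ∞ (jet2 φ) := by
  have hφα : ∀ α, ContDiff ℝ ∞ fun y => φ y α := contDiff_pi.1 hφ
  refine contDiff_id.prodMk (hφ.prodMk (ContDiff.prodMk ?_ ?_))
  · exact contDiff_pi.2 fun i => contDiff_pi.2 fun α => contDiff_pd (hφα α) i
  · exact contDiff_pi.2 fun I => contDiff_pi.2 fun α => contDiff_pdI (hφα α) I.1

theorem fderiv_jet2_apply {φ : (Fin m → ℝ) → Fin n → ℝ} (hφ : ContDiff ℝ ∞ φ)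
    (x v : Fin m → ℝ) :
    fderiv ℝ (jet2 φ) x v =
      (v, fun α => fderiv ℝ (fun y => φ y α) x v,
        fun i α => fderiv ℝ (pd i fun y => φ y α) x v,
        fun I α => fderiv ℝ (pdI I.1 fun y => φ y α) x v) := by
  have hφα : ∀ α, ContDiff ℝ ∞ fun y => φ y α := contDiff_pi.1 hφ
  have hdiff : ∀ {f : (Fin m → ℝ) → ℝ}, ContDiff ℝ ∞ f → HasFDerivAt f (fderiv ℝ f x) x :=
    fun hf => (hf.differentiable (by simp)).differentiableAt.hasFDerivAt
  have hjet : HasFDerivAt (jet2 φ) _ x := (hasFDerivAt_id x).prodMk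
    ((hasFDerivAt_pi.2 fun α => hdiff (hφα α)).prodMk
      ((hasFDerivAt_pi.2 fun i => hasFDerivAt_pi.2 fun α => hdiff (contDiff_pd (hφα α) i)).prodMk
        (hasFDerivAt_pi.2 fun (I : Idx m 2) =>
          hasFDerivAt_pi.2 fun α => hdiff (contDiff_pdI (hφα α) I.1))))
  rw [hjet.fderiv]
  rfl

theorem apply_eq_sum_coord (T : J2 m n →L[ℝ] ℝ) (v : J2 m n) :
    T v = ∑ k, v.1 k * T (eX k) + ∑ α, v.2.1 α * T (eU α)
      + ∑ α, ∑ i, v.2.2.1 i α * T (eU1 i α) + ∑ α, ∑ I, v.2.2.2 I α * T (eU2 I α) := by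
  have hv : v = ∑ k, v.1 k • eX k + ∑ α, v.2.1 α • eU α
      + ∑ α, ∑ i, v.2.2.1 i α • eU1 i α + ∑ α, ∑ I, v.2.2.2 I α • eU2 I α := by
    ext <;> simp [eX, eU, eU1, eU2, Prod.fst_sum, Prod.snd_sum, Finset.sum_apply, Pi.single_apply]
  conv_lhs => rw [hv]
  simp [map_sum, map_smul]

theorem pd_comp_jet2 {G : J2 m n → ℝ} {φ : (Fin m → ℝ) → Fin n → ℝ} (hφ : ContDiff ℝ ∞ φ)
    {x : Fin m → ℝ} (hG : DifferentiableAt ℝ G (jet2 φ x)) (j : Fin m) :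
    pd j (fun y => G (jet2 φ y)) x = totalD j G (jet3 φ x) := by
  have hφα : ∀ α, ContDiff ℝ ∞ fun y => φ y α := contDiff_pi.1 hφ
  rw [pd, fderiv_fun_comp x hG ((contDiff_jet2 hφ).differentiable (by simp) x),
    ContinuousLinearMap.comp_apply, fderiv_jet2_apply hφ, apply_eq_sum_coord]
  have hjet3_idx2 : ∀ i α, (jet3 φ x).2.2.2.1 (idx2 i j) α = pd j (pd i fun y => φ y α) x :=
    fun i α => congrFun (pdI_idx2 (hφα α) i j) x
  have hjet3_succ : ∀ (I : Idx m 2) α,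
      (jet3 φ x).2.2.2.2 (I.succ j) α = pd j (pdI I.1 fun y => φ y α) x :=
    fun I α => congrFun (pdI_add_single (hφα α) I.1 j) x
  simp only [totalD, dX, dU, dU1, dU2, π32_jet3, hjet3_idx2, hjet3_succ]
  congr 3
  simp [Pi.single_apply]

end ChainRule

section LegendreMomenta

variable {m n : ℕ} {L : J2 m n → ℝ} {φ : (Fin m → ℝ) → Fin n → ℝ}

theorem FLp1_jet3 (hL : ContDiff ℝ ∞ L) (hφ : ContDiff ℝ ∞ φ) (i : Fin m) (α : Fin n)
    (x : Fin m → ℝ) :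
    FLp1 L i α (jet3 φ x) = dU1 i α L (jet2 φ x)
      - ∑ j, (nij i j)⁻¹ * pd j (fun y => dU2 (idx2 i j) α L (jet2 φ y)) x := by
  have hdU2 : ∀ j, DifferentiableAt ℝ (dU2 (idx2 i j) α L) (jet2 φ x) := fun j =>
    (contDiff_fderiv_apply_const hL _).differentiable (by simp) _
  simp only [FLp1, pd_comp_jet2 hφ (hdU2 _), π32_jet3]

theorem sum_pd_FLp1_jet3 (hL : ContDiff ℝ ∞ L) (hφ : ContDiff ℝ ∞ φ) (α : Fin n)
    (x : Fin m → ℝ) :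
    ∑ i, pd i (fun y => FLp1 L i α (jet3 φ y)) x = dU α L (jet2 φ x) - EL L φ α x := by
  set U : Fin m → (Fin m → ℝ) → ℝ := fun i y => dU1 i α L (jet2 φ y)
  set F : Idx m 2 → (Fin m → ℝ) → ℝ := fun I y => dU2 I α L (jet2 φ y)
  have hU : ∀ i, ContDiff ℝ ∞ (U i) := fun i =>
    (contDiff_fderiv_apply_const hL _).comp (contDiff_jet2 hφ)
  have hF : ∀ I, ContDiff ℝ ∞ (F I) := fun I =>
    (contDiff_fderiv_apply_const hL _).comp (contDiff_jet2 hφ)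
  have hdF : ∀ i j, DifferentiableAt ℝ (pd j (F (idx2 i j))) x := fun i j =>
    (contDiff_pd (hF _) j).differentiable (by simp) x
  have hpd_FLp1 : ∀ i, pd i (fun y => FLp1 L i α (jet3 φ y)) x
      = pd i (U i) x - ∑ j, (nij i j)⁻¹ * pdI (idx2 i j).1 (F (idx2 i j)) x := fun i => by
    simp only [FLp1_jet3 hL hφ]
    rw [pd_sub ((hU i).differentiable (by simp) x)
        (.fun_sum fun j _ => (hdF i j).const_mul _),
      pd_sum fun j _ => (hdF i j).const_mul _]
    simp only [pd_const_mul (hdF _ _), pdI_idx2 (hF _), pd_comm (hF _)]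
  calc ∑ i, pd i (fun y => FLp1 L i α (jet3 φ y)) x
      = ∑ i, pd i (U i) x - ∑ i, ∑ j, (nij i j)⁻¹ * pdI (idx2 i j).1 (F (idx2 i j)) x := by
        rw [← Finset.sum_sub_distrib]
        exact Finset.sum_congr rfl fun i _ => hpd_FLp1 i
    _ = ∑ i, pd i (U i) x - ∑ I, pdI I.1 (F I) x := by
        rw [sum_sum_inv_nij_mul fun I => pdI I.1 (F I) x]
    _ = dU α L (jet2 φ x) - EL L φ α x := by
        rw [EL]
        ring

end LegendreMomenta

/-- (a) the second family of unified field equations holds identically for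
the Legendre momenta along `φ`; (b) the first family holds iff `φ` satisfies the
Euler–Lagrange field equations. -/
theorem statement6 (m n : ℕ) (L : J2 m n → ℝ) (hL : ContDiff ℝ (⊤ : ℕ∞) L)
    (φ : (Fin m → ℝ) → Fin n → ℝ) (hφ : ContDiff ℝ (⊤ : ℕ∞) φ) :
    (∀ (i : Fin m) (α : Fin n) (x : Fin m → ℝ),
      (∑ j, (nij i j)⁻¹ * pd j (fun y => dU2 (idx2 i j) α L (jet2 φ y)) x)
        = dU1 i α L (jet2 φ x) - FLp1 L i α (jet3 φ x)) ∧
    ((∀ (α : Fin n) (x : Fin m → ℝ),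
        (∑ i, pd i (fun y => FLp1 L i α (jet3 φ y)) x) = dU α L (jet2 φ x))
      ↔ ∀ (α : Fin n) (x : Fin m → ℝ), EL L φ α x = 0) := by
  refine ⟨fun i α x => by rw [FLp1_jet3 hL hφ, sub_sub_cancel], ?_⟩
  simp only [sum_pd_FLp1_jet3 hL hφ, sub_eq_self]
end
end
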